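/- A compact Hausdorff space X of weight at most ℵ₁ is Valdivia compact if and only if X is homeomorphic to the limit of a continuous inverse sequence indexed by ω₁ of compact metrizable spaces whose bonding maps are retractions. -/

import Mathlib

open Set Filter Topology

universe u v

/-- A `ι`-indexed family of topological spaces with bonding maps (the data of an
inverse sequence). -/
structure Tower (ι : Type v) [LinearOrder ι] where
  S : ι → Type u
  topo : ∀ α, TopologicalSpace (S α)
  r : ∀ ⦃α β : ι⦄, α ≤ β → S β → S α

attribute [instance] Tower.topo

namespace Tower

variable {ι : Type v} [LinearOrder ι]

/-- The limit of the tower: its space of threads. -/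
abbrev Lim (T : Tower.{u, v} ι) : Type (max u v) :=
  {x : ∀ α, T.S α // ∀ ⦃α β : ι⦄ (h : α ≤ β), T.r h (x β) = x α}

/-- The tower is a continuous inverse sequence of compact Hausdorff spaces:
all spaces are compact Hausdorff, the bonding maps are continuous surjections
satisfying the identity and composition laws, and at every limit point `δ` of the
index set the map `S δ → Π_{α<δ} S α` is injective. -/
structure IsContInvSeq (T : Tower.{u, v} ι) : Prop where
  compact : ∀ α, CompactSpace (T.S α)
  t2 : ∀ α, T2Space (T.S α)
  continuous : ∀ ⦃α β : ι⦄ (h : α ≤ β), Continuous (T.r h)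
  surjective : ∀ ⦃α β : ι⦄ (h : α ≤ β), Function.Surjective (T.r h)
  map_id : ∀ (α : ι) (x : T.S α), T.r (le_refl α) x = x
  map_comp : ∀ ⦃α β γ : ι⦄ (h₁ : α ≤ β) (h₂ : β ≤ γ) (x : T.S γ),
    T.r h₁ (T.r h₂ x) = T.r (h₁.trans h₂) x
  limit_inj : ∀ δ : ι, (∃ α, α < δ) → (∀ α, α < δ → ∃ β, α < β ∧ β < δ) →
    ∀ x y : T.S δ, (∀ (α : ι) (h : α < δ), T.r h.le x = T.r h.le y) → x = y

end Tower

/-- A continuous surjection which admits a continuous right inverse. -/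
def IsRetraction {X Y : Type*} [TopologicalSpace X] [TopologicalSpace Y]
    (f : X → Y) : Prop :=
  Continuous f ∧ Function.Surjective f ∧ ∃ g : Y → X, Continuous g ∧ f ∘ g = id

/-- `Σ(T)`: the points of the Tikhonov cube `[0,1]^T` with countable support. -/
def SigmaProd (T : Type*) : Set (T → unitInterval) :=
  {x | {t | x t ≠ 0}.Countable}

/-- A Valdivia embedding into the cube `[0,1]^T`. -/
def IsValdiviaEmbedding {X : Type*} [TopologicalSpace X] {T : Type*}
    (h : X → T → unitInterval) : Prop :=
  Topology.IsEmbedding h ∧ Set.range h = closure (Set.range h ∩ SigmaProd T)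

/-- A space is Valdivia compact if it admits a Valdivia embedding into some cube. -/
def IsValdivia (X : Type u) [TopologicalSpace X] : Prop :=
  ∃ (T : Type u) (h : X → T → unitInterval), IsValdiviaEmbedding h

/-- The weight of a topological space: the least cardinality of a base. -/
noncomputable def tweight (X : Type u) [TopologicalSpace X] : Cardinal.{u} :=
  sInf {c | ∃ B : Set (Set X), TopologicalSpace.IsTopologicalBasis B ∧ Cardinal.mk ↥B = c}

/-!
(⇒) Realise `X` as `K ⊆ [0,1]^τ` with `K = closure (K ∩ Σ(τ))`; weight `≤ ℵ₁` lets us take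
`#τ ≤ ℵ₁`. Call `A ⊆ τ` good if zeroing the coordinates outside `A` maps `K` into `K`. Since
countably many coordinates of points of `K ∩ Σ(τ)` can be approximated by points of `K ∩ Σ(τ)`
with supports in a countable set, every countable set of coordinates lies in a countable good one
(closing off `ω` times), and unions of chains of good sets are good. So `τ` is the union of a
continuous `ω₁`-chain of countable good sets `A δ`, and `K` is the limit of its projections to the
`A δ`; these are retractions, because each projection of `K` is a subset of `K`.

(⇐) Choose sections `s δ` of the bonding maps `S (δ + 1) → S δ` and embed every `S δ` into the
Hilbert cube. A thread `x` is coded by `x ⊥` and, for each `δ`, by the positive and negative parts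
of the difference between `x (δ + 1)` and `s δ (x δ)`; this embeds the limit into a cube. The
threads that follow the sections above some `α` have countable support, and they converge to `x`
as `α` grows.
-/

open Cardinal Order TopologicalSpace Function unitInterval

theorem Order.isSuccLimit_iff_exists_lt_and_exists_between {ι : Type*} [LinearOrder ι] {δ : ι} :
    IsSuccLimit δ ↔ (∃ α, α < δ) ∧ ∀ α, α < δ → ∃ β, α < β ∧ β < δ := by
  refine ⟨fun h => ⟨not_isMin_iff.1 h.not_isMin, fun α hα => ?_⟩, fun ⟨h₁, h₂⟩ =>
    ⟨not_isMin_iff.2 h₁, fun α hα => ?_⟩⟩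
  · obtain ⟨β, hβ, hαβ⟩ := h.lt_iff_exists_lt.1 hα
    exact ⟨β, hαβ, hβ⟩
  · obtain ⟨β, hαβ, hβ⟩ := h₂ α hα.lt
    exact hα.2 hαβ hβ

namespace Tower.IsContInvSeq

variable {ι : Type v} [LinearOrder ι] {T : Tower.{u, v} ι}

theorem eq_of_isSuccLimit (hT : T.IsContInvSeq) {δ : ι} (hδ : IsSuccLimit δ) {x y : T.S δ}
    (h : ∀ α (hα : α < δ), T.r hα.le x = T.r hα.le y) : x = y :=
  let ⟨h₁, h₂⟩ := isSuccLimit_iff_exists_lt_and_exists_between.1 hδ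
  hT.limit_inj δ h₁ h₂ x y h

theorem compactSpace_lim (hT : T.IsContInvSeq) : CompactSpace T.Lim := by
  have := hT.compact
  have := hT.t2
  have : IsClosed {x : ∀ α, T.S α | ∀ ⦃α β : ι⦄ (h : α ≤ β), T.r h (x β) = x α} := by
    simp only [ofPred_forall]
    exact isClosed_iInter fun α => isClosed_iInter fun β => isClosed_iInter fun h =>
      isClosed_eq ((hT.continuous h).comp (continuous_apply β)) (continuous_apply α)
  exact isCompact_iff_compactSpace.1 this.isCompact

theorem exists_lift (hT : T.IsContInvSeq) {δ : ι} (hδ : ¬IsMin δ) (y : ∀ γ, γ < δ → T.S γ)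
    (hy : ∀ γ β (hγβ : γ ≤ β) (hβ : β < δ), T.r hγβ (y β hβ) = y γ (hγβ.trans_lt hβ)) :
    ∃ w : T.S δ, ∀ γ (hγ : γ < δ), T.r hγ.le w = y γ hγ := by
  have := hT.compact
  have := hT.t2
  obtain ⟨γ₀, hγ₀⟩ := not_isMin_iff.1 hδ
  have : Nonempty (Iio δ) := ⟨⟨γ₀, hγ₀⟩⟩
  let C : Iio δ → Set (T.S δ) := fun γ => T.r (le_of_lt γ.2) ⁻¹' {y γ γ.2}
  have hC : ∀ γ, IsClosed (C γ) := fun γ => isClosed_singleton.preimage (hT.continuous _)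
  have hanti : Antitone C := fun γ β hγβ w (hw : T.r _ w = _) => by
    change T.r _ w = _
    rw [← hT.map_comp hγβ (le_of_lt β.2), hw]
    exact hy _ _ hγβ β.2
  obtain ⟨w, hw⟩ := IsCompact.nonempty_iInter_of_directed_nonempty_isCompact_isClosed C
    hanti.directed_ge (fun γ => hT.surjective _ _) (fun γ => (hC γ).isCompact) hC
  exact ⟨w, fun γ hγ => mem_iInter.1 hw ⟨γ, hγ⟩⟩

variable [WellFoundedLT ι] [SuccOrder ι] [NoMaxOrder ι]

open scoped Classical in
noncomputable def extendBySections (hT : T.IsContInvSeq) (s : ∀ δ, T.S δ → T.S (succ δ))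
    {α : ι} (z : T.S α) (δ : ι) : T.S δ :=
  SuccOrder.prelimitRecOn (motive := T.S) δ
    (fun a _ v => if h : succ a ≤ α then T.r h z else s a v)
    (fun a _ v => if h : a ≤ α then T.r h z else
      if hw : ∃ w : T.S a, ∀ γ (hγ : γ < a), T.r hγ.le w = v γ hγ then hw.choose
      -- never reached: the values below `a` are compatible, so a lift exists by compactness
      else (hT.surjective (not_le.1 h).le z).choose)

section extendBySections

variable (hT : T.IsContInvSeq) (s : ∀ δ, T.S δ → T.S (succ δ)) {α : ι} (z : T.S α)

theorem extendBySections_of_le {δ : ι} (h : δ ≤ α) : hT.extendBySections s z δ = T.r h z := by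
  induction δ using SuccOrder.prelimitRecOn with
  | succ a _ _ => simp [extendBySections, succ_le_iff.1 h]
  | isSuccPrelimit a ha _ => simp [extendBySections, ha, h]

theorem extendBySections_succ {δ : ι} (h : ¬succ δ ≤ α) :
    hT.extendBySections s z (succ δ) = s δ (hT.extendBySections s z δ) := by
  rw [extendBySections, SuccOrder.prelimitRecOn_succ, dif_neg h]
  rfl

theorem extendBySections_compatible (hs : ∀ δ z, T.r (le_succ δ) (s δ z) = z) {δ γ : ι}
    (hγδ : γ ≤ δ) : T.r hγδ (hT.extendBySections s z δ) = hT.extendBySections s z γ := by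
  induction δ using SuccOrder.prelimitRecOn generalizing γ with
  | succ a _ ih =>
    by_cases hα : succ a ≤ α
    · rw [extendBySections_of_le _ _ _ hα, extendBySections_of_le _ _ _ (hγδ.trans hα),
        hT.map_comp]
    rcases hγδ.eq_or_lt with rfl | hlt
    · exact hT.map_id _ _
    have hγa : γ ≤ a := lt_succ_iff.1 hlt
    rw [extendBySections_succ _ _ _ hα, ← hT.map_comp hγa (le_succ a), hs, ih hγa]
  | isSuccPrelimit a ha ih =>
    by_cases hα : a ≤ α
    · rw [extendBySections_of_le _ _ _ hα, extendBySections_of_le _ _ _ (hγδ.trans hα),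
        hT.map_comp]
    rcases hγδ.eq_or_lt with rfl | hlt
    · exact hT.map_id _ _
    have hex : ∃ w : T.S a, ∀ γ (hγ : γ < a), T.r hγ.le w = hT.extendBySections s z γ :=
      hT.exists_lift (not_isMin_of_lt (not_le.1 hα)) _ fun γ β h hβ => ih β hβ h
    rw [extendBySections, SuccOrder.prelimitRecOn_of_isSuccPrelimit _ _ ha, dif_neg hα]
    split_ifs with hw
    · exact hw.choose_spec γ hlt
    · exact absurd hex hw

end extendBySections

theorem exists_thread_extending (hT : T.IsContInvSeq) {s : ∀ δ, T.S δ → T.S (succ δ)}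
    (hs : ∀ δ z, T.r (le_succ δ) (s δ z) = z) {α : ι} (z : T.S α) :
    ∃ y : T.Lim, y.1 α = z ∧ ∀ δ, α ≤ δ → y.1 (succ δ) = s δ (y.1 δ) :=
  ⟨⟨hT.extendBySections s z, fun _ _ h => hT.extendBySections_compatible s z hs h⟩,
    (hT.extendBySections_of_le s z le_rfl).trans (hT.map_id _ _),
    fun _ h => hT.extendBySections_succ s z (not_le.2 (h.trans_lt (lt_succ _)))⟩

end Tower.IsContInvSeq

namespace unitInterval

def posSub (a b : I) : I :=
  ⟨max (a - b : ℝ) 0, le_max_right _ _, max_le (by linarith [a.2.2, b.2.1]) zero_le_one⟩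

theorem posSub_self (a : I) : posSub a a = 0 := by
  simp [posSub]

theorem coe_posSub_sub_posSub (a b : I) : (posSub a b - posSub b a : ℝ) = a - b := by
  simp only [posSub]
  rcases le_total (a : ℝ) b with h | h
  · rw [max_eq_right (by linarith), max_eq_left (by linarith)]
    ring
  · rw [max_eq_left (by linarith), max_eq_right (by linarith)]
    ring

theorem continuous_posSub : Continuous fun p : I × I => posSub p.1 p.2 :=
  ((continuous_subtype_val.comp continuous_fst).sub
    (continuous_subtype_val.comp continuous_snd)).max continuous_const |>.subtype_mk _

def splitDiff {κ : Type*} (v w : κ → I) (c : κ × Bool) : I :=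
  bif c.2 then posSub (v c.1) (w c.1) else posSub (w c.1) (v c.1)

variable {κ : Type*}

theorem splitDiff_self (v : κ → I) : splitDiff v v = 0 := by
  ext ⟨k, b⟩
  cases b <;> simp [splitDiff, posSub_self]

theorem splitDiff_left_injective (w : κ → I) : Injective fun v => splitDiff v w := by
  intro v v' h
  funext k
  have h₁ := congrFun h (k, true)
  have h₂ := congrFun h (k, false)
  simp only [splitDiff, cond_true, cond_false] at h₁ h₂
  apply Subtype.ext
  have := coe_posSub_sub_posSub (v k) (w k)
  rw [h₁, h₂, coe_posSub_sub_posSub] at this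
  linarith

theorem continuous_splitDiff : Continuous fun p : (κ → I) × (κ → I) => splitDiff p.1 p.2 := by
  refine continuous_pi fun ⟨k, b⟩ => ?_
  have hv : Continuous fun p : (κ → I) × (κ → I) => p.1 k :=
    (continuous_apply k).comp continuous_fst
  have hw : Continuous fun p : (κ → I) × (κ → I) => p.2 k :=
    (continuous_apply k).comp continuous_snd
  cases b
  · exact continuous_posSub.comp (hw.prodMk hv)
  · exact continuous_posSub.comp (hv.prodMk hw)

end unitInterval

theorem isValdiviaEmbedding_of_subset_closure {X T : Type*} [TopologicalSpace X] [CompactSpace X]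
    {h : X → T → I} (hc : Continuous h) (hi : Injective h)
    (hsig : range h ⊆ closure (range h ∩ SigmaProd T)) : IsValdiviaEmbedding h :=
  ⟨(hc.isClosedEmbedding hi).isEmbedding, hsig.antisymm <|
    (closure_mono inter_subset_left).trans (isCompact_range hc).isClosed.closure_subset⟩

theorem IsValdivia.of_homeomorph {X Y : Type u} [TopologicalSpace X] [TopologicalSpace Y]
    (φ : X ≃ₜ Y) (hY : IsValdivia Y) : IsValdivia X := by
  obtain ⟨T, h, hemb, hsig⟩ := hY
  exact ⟨T, h ∘ φ, hemb.comp φ.isEmbedding, by rwa [range_comp, φ.range_coe, image_univ]⟩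

theorem exists_isEmbedding_hilbertCube (Y : Type*) [TopologicalSpace Y] [CompactSpace Y]
    [MetrizableSpace Y] : ∃ e : Y → ℕ → I, IsEmbedding e := by
  let := metrizableSpaceMetric Y
  exact Metric.PiNatEmbed.exists_embedding_to_hilbert_cube

namespace Tower

variable {ι : Type u} [LinearOrder ι] [SuccOrder ι] [OrderBot ι] {T : Tower.{u, u} ι}

noncomputable def sectionDefect (e : ∀ δ, T.S δ → ℕ → I) (s : ∀ δ, T.S δ → T.S (succ δ))
    (x : T.Lim) : ℕ ⊕ (ι × ℕ × Bool) → I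
  | .inl n => e ⊥ (x.1 ⊥) n
  | .inr (δ, c) => splitDiff (e (succ δ) (x.1 (succ δ))) (e (succ δ) (s δ (x.1 δ))) c

variable {e : ∀ δ, T.S δ → ℕ → I} {s : ∀ δ, T.S δ → T.S (succ δ)}

theorem continuous_sectionDefect (he : ∀ δ, Continuous (e δ)) (hs : ∀ δ, Continuous (s δ)) :
    Continuous (sectionDefect e s) := by
  have hx : ∀ δ, Continuous fun x : T.Lim => x.1 δ :=
    fun δ => (continuous_apply δ).comp continuous_subtype_val
  refine continuous_pi fun c => ?_
  rcases c with n | ⟨δ, c⟩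
  · exact (continuous_apply n).comp ((he ⊥).comp (hx ⊥))
  · exact (continuous_apply c).comp (continuous_splitDiff.comp
      (((he _).comp (hx _)).prodMk ((he _).comp ((hs δ).comp (hx δ)))))

theorem sectionDefect_injective [WellFoundedLT ι] (hT : T.IsContInvSeq)
    (he : ∀ δ, Injective (e δ)) : Injective (sectionDefect e s) := by
  intro x x' hxx
  apply Subtype.ext
  funext δ
  induction δ using SuccOrder.limitRecOn with
  | isMin a ha =>
    obtain rfl := ha.eq_bot
    exact he ⊥ (funext fun n => congrFun hxx (.inl n))
  | succ a _ ih =>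
    refine he _ (splitDiff_left_injective (e (succ a) (s a (x'.1 a))) (funext fun c => ?_))
    simpa [sectionDefect, ih] using congrFun hxx (.inr (a, c))
  | isSuccLimit a ha ih =>
    exact hT.eq_of_isSuccLimit ha fun γ hγ => by rw [x.2, x'.2, ih γ hγ]

theorem sectionDefect_mem_closure [WellFoundedLT ι] [NoMaxOrder ι] (hT : T.IsContInvSeq)
    (hι : ∀ δ : ι, (Iio δ).Countable) (hs : ∀ δ z, T.r (le_succ δ) (s δ z) = z) (x : T.Lim) :
    sectionDefect e s x ∈ closure (range (sectionDefect e s) ∩ SigmaProd (ℕ ⊕ (ι × ℕ × Bool))) := by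
  choose y hyα hys using fun α => hT.exists_thread_extending hs (x.1 α)
  have hyx : ∀ α γ, γ ≤ α → (y α).1 γ = x.1 γ := fun α γ h => by rw [← (y α).2 h, hyα, x.2 h]
  refine mem_closure_of_tendsto (f := fun α => sectionDefect e s (y α)) (b := atTop)
    (tendsto_pi_nhds.2 ?_) (Eventually.of_forall fun α => ⟨mem_range_self _, ?_⟩)
  · rintro (n | ⟨δ, c⟩)
    · exact tendsto_const_nhds.congr' (Eventually.of_forall fun α => by
        simp [sectionDefect, hyx α ⊥ bot_le])
    · refine tendsto_const_nhds.congr' ?_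
      filter_upwards [eventually_ge_atTop (succ δ)] with α hα
      simp [sectionDefect, hyx α _ hα, hyx α δ ((le_succ δ).trans hα)]
  · refine ((countable_range Sum.inl).union (((hι α).prod countable_univ).image Sum.inr)).mono ?_
    rintro (n | ⟨δ, c⟩) hc
    · exact Or.inl (mem_range_self n)
    · refine Or.inr ⟨(δ, c), ⟨?_, trivial⟩, rfl⟩
      by_contra hδ
      exact hc (by simp [sectionDefect, hys α δ (not_lt.1 hδ), splitDiff_self])

theorem IsContInvSeq.isValdivia_lim [WellFoundedLT ι] [NoMaxOrder ι]
    (hι : ∀ δ : ι, (Iio δ).Countable) (hT : T.IsContInvSeq) (hmet : ∀ δ, MetrizableSpace (T.S δ))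
    (hret : ∀ ⦃α β : ι⦄ (h : α ≤ β), IsRetraction (T.r h)) : IsValdivia T.Lim := by
  have := hT.compact
  have := hT.compactSpace_lim
  choose s hs_cont hs using fun δ => (hret (le_succ δ)).2.2
  choose e he using fun δ => exists_isEmbedding_hilbertCube (T.S δ)
  exact ⟨_, sectionDefect e s, isValdiviaEmbedding_of_subset_closure
    (continuous_sectionDefect (fun δ => (he δ).continuous) hs_cont)
    (sectionDefect_injective hT fun δ => (he δ).injective)
    (range_subset_iff.2 (sectionDefect_mem_closure hT hι fun δ => congrFun (hs δ)))⟩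

end Tower

section IndicatorTower

variable {τ : Type u} {ι : Type v} [LinearOrder ι]

theorem continuous_indicator_pi {M : Type*} [TopologicalSpace M] [Zero M] (A : Set τ) :
    Continuous fun x : τ → M => A.indicator x := by
  refine continuous_pi fun t => ?_
  by_cases ht : t ∈ A
  · simpa [indicator_of_mem ht] using continuous_apply t
  · simpa [indicator_of_notMem ht] using continuous_const

theorem indicator_indicator_of_subset {M : Type*} [Zero M] {A B : Set τ} (h : A ⊆ B)
    (x : τ → M) : A.indicator (B.indicator x) = A.indicator x := by
  rw [indicator_indicator, inter_eq_left.2 h]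

theorem indicator_eq_self_of_mem_image {A : Set τ} {K : Set (τ → I)} {y : τ → I}
    (hy : y ∈ A.indicator '' K) : A.indicator y = y := by
  obtain ⟨k, -, rfl⟩ := hy
  rw [indicator_indicator, inter_self]

noncomputable def indicatorTower (K : Set (τ → I)) (A : ι → Set τ) (hA : Monotone A) :
    Tower.{u, v} ι where
  S δ := (A δ).indicator '' K
  topo _ := inferInstance
  r α β h y := ⟨(A α).indicator y, by
    obtain ⟨k, hk, hky⟩ := y.2
    exact ⟨k, hk, by rw [← hky, indicator_indicator_of_subset (hA h)]⟩⟩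

variable {K : Set (τ → I)} {A : ι → Set τ} {hA : Monotone A}

theorem indicatorTower_r_apply {α β : ι} (h : α ≤ β) (y : (indicatorTower K A hA).S β) :
    ((indicatorTower K A hA).r h y).1 = (A α).indicator y.1 := rfl

theorem indicatorTower_apply_of_notMem {δ : ι} (y : (indicatorTower K A hA).S δ) {t : τ}
    (ht : t ∉ A δ) : y.1 t = 0 := by
  rw [← indicator_eq_self_of_mem_image y.2, indicator_of_notMem ht]

theorem isRetraction_indicatorTower_r (hmaps : ∀ δ, MapsTo (A δ).indicator K K) {α β : ι}
    (h : α ≤ β) : IsRetraction ((indicatorTower K A hA).r h) := by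
  have hcont : Continuous ((indicatorTower K A hA).r h) :=
    ((continuous_indicator_pi _).comp continuous_subtype_val).subtype_mk _
  let g : (indicatorTower K A hA).S α → (indicatorTower K A hA).S β := fun y =>
    ⟨y.1, y.1, (hmaps α).image_subset y.2, by
      rw [← indicator_eq_self_of_mem_image y.2, indicator_indicator, inter_eq_right.2 (hA h)]⟩
  have hg : (indicatorTower K A hA).r h ∘ g = id :=
    funext fun y => Subtype.ext (indicator_eq_self_of_mem_image y.2)
  exact ⟨hcont, fun y => ⟨g y, congrFun hg y⟩, g, continuous_subtype_val.subtype_mk _, hg⟩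

theorem isContInvSeq_indicatorTower (hK : IsCompact K) (hmaps : ∀ δ, MapsTo (A δ).indicator K K)
    (hlim : ∀ δ, IsSuccLimit δ → A δ ⊆ ⋃ γ : Iio δ, A γ) :
    (indicatorTower K A hA).IsContInvSeq where
  compact δ := isCompact_iff_compactSpace.1 (hK.image (continuous_indicator_pi (A δ)))
  t2 _ := inferInstanceAs (T2Space (Subtype _))
  continuous _ _ h := (isRetraction_indicatorTower_r hmaps h).1
  surjective _ _ h := (isRetraction_indicatorTower_r hmaps h).2.1
  map_id _ y := Subtype.ext (indicator_eq_self_of_mem_image y.2)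
  map_comp _ _ _ h₁ _ _ := Subtype.ext (indicator_indicator_of_subset (hA h₁) _)
  limit_inj δ h₁ h₂ x y hxy := by
    have hδ := isSuccLimit_iff_exists_lt_and_exists_between.2 ⟨h₁, h₂⟩
    refine Subtype.ext (funext fun t => ?_)
    by_cases ht : t ∈ A δ
    · obtain ⟨⟨γ, hγ⟩, htγ⟩ := mem_iUnion.1 (hlim δ hδ ht)
      simpa [indicatorTower_r_apply, indicator_of_mem htγ] using
        congrFun (congrArg Subtype.val (hxy γ hγ)) t
    · rw [indicatorTower_apply_of_notMem x ht, indicatorTower_apply_of_notMem y ht]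

theorem metrizableSpace_indicatorTower (hK : IsCompact K) {δ : ι} (hδ : (A δ).Countable) :
    MetrizableSpace ((indicatorTower K A hA).S δ) := by
  have : Countable (A δ) := hδ.to_subtype
  have : CompactSpace ((indicatorTower K A hA).S δ) :=
    isCompact_iff_compactSpace.1 (hK.image (continuous_indicator_pi (A δ)))
  have hinj : Injective fun (y : (indicatorTower K A hA).S δ) (t : A δ) => y.1 t :=
    fun y z h => Subtype.ext <| funext fun t => by
      by_cases ht : t ∈ A δ
      · exact congrFun h ⟨t, ht⟩
      · rw [indicatorTower_apply_of_notMem y ht, indicatorTower_apply_of_notMem z ht]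
  have hc : Continuous fun (y : (indicatorTower K A hA).S δ) (t : A δ) => y.1 t :=
    continuous_pi fun t => (continuous_apply t.1).comp continuous_subtype_val
  exact (hc.isClosedEmbedding hinj).isEmbedding.metrizableSpace

theorem exists_indicator_eq_of_mem_lim [Nonempty ι] (hK : IsClosed K)
    (hmaps : ∀ δ, MapsTo (A δ).indicator K K) (hcover : ∀ t, ∃ δ, t ∈ A δ)
    (y : (indicatorTower K A hA).Lim) : ∃ k ∈ K, ∀ δ, (A δ).indicator k = (y.1 δ).1 := by
  choose δ hδ using hcover
  have hstable : ∀ t β, δ t ≤ β → (y.1 β).1 t = (y.1 (δ t)).1 t := fun t β h => by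
    rw [← y.2 h, indicatorTower_r_apply, indicator_of_mem (hδ t)]
  refine ⟨fun t => (y.1 (δ t)).1 t, hK.mem_of_tendsto (f := fun β => (y.1 β).1) (b := atTop)
    (tendsto_pi_nhds.2 fun t => tendsto_const_nhds.congr' ?_)
    (Eventually.of_forall fun β => (hmaps β).image_subset (y.1 β).2), fun β => funext fun t => ?_⟩
  · filter_upwards [eventually_ge_atTop (δ t)] with β hβ
    exact (hstable t β hβ).symm
  · by_cases ht : t ∈ A β
    · rw [indicator_of_mem ht, ← hstable t (max β (δ t)) (le_max_right _ _),
        ← y.2 (le_max_left β (δ t)), indicatorTower_r_apply, indicator_of_mem ht]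
    · rw [indicator_of_notMem ht, indicatorTower_apply_of_notMem _ ht]

theorem nonempty_homeomorph_indicatorTower_lim [Nonempty ι] (hK : IsCompact K)
    (hmaps : ∀ δ, MapsTo (A δ).indicator K K) (hcover : ∀ t, ∃ δ, t ∈ A δ)
    (hT : (indicatorTower K A hA).IsContInvSeq) : Nonempty (K ≃ₜ (indicatorTower K A hA).Lim) := by
  have := hT.t2
  have : CompactSpace K := isCompact_iff_compactSpace.1 hK
  let Φ : K → (indicatorTower K A hA).Lim := fun k => ⟨fun δ => ⟨(A δ).indicator k, k, k.2, rfl⟩,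
    fun _ _ h => Subtype.ext (indicator_indicator_of_subset (hA h) _)⟩
  have hΦc : Continuous Φ := (continuous_pi fun δ =>
    ((continuous_indicator_pi _).comp continuous_subtype_val).subtype_mk _).subtype_mk _
  have hΦi : Injective Φ := fun k k' h => Subtype.ext <| funext fun t => by
    obtain ⟨δ, ht⟩ := hcover t
    simpa [Φ, indicator_of_mem ht] using
      congrFun (congrArg Subtype.val (congrFun (congrArg Subtype.val h) δ)) t
  have hΦs : Surjective Φ := fun y => by
    obtain ⟨k, hk, hky⟩ := exists_indicator_eq_of_mem_lim hK.isClosed hmaps hcover y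
    exact ⟨⟨k, hk⟩, Subtype.ext <| funext fun δ => Subtype.ext (hky δ)⟩
  exact ⟨hΦc.homeoOfEquivCompactToT2 (f := Equiv.ofBijective Φ ⟨hΦi, hΦs⟩)⟩

end IndicatorTower

section ClosingOff

variable {τ : Type u}

theorem exists_countable_approx {D : Set (τ → I)} (hD : D ⊆ SigmaProd τ) {A : Set τ}
    (hA : A.Countable) : ∃ B, A ⊆ B ∧ B.Countable ∧
      A.domRestrict '' D ⊆ closure (A.domRestrict '' {y ∈ D | support y ⊆ B}) := by
  have : Countable A := hA.to_subtype
  obtain ⟨E, hED, hEc, hDE⟩ :=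
    (IsSeparable.of_separableSpace (A.domRestrict '' D)).exists_countable_dense_subset
  have : Countable E := hEc.to_subtype
  choose g hgD hg using fun z : E => hED z.2
  refine ⟨A ∪ ⋃ z, support (g z), subset_union_left,
    hA.union (countable_iUnion fun z => hD (hgD z)), hDE.trans (closure_mono ?_)⟩
  intro w hw
  exact ⟨g ⟨w, hw⟩, ⟨hgD _, subset_union_right.trans' (subset_iUnion (fun z => support (g z)) _)⟩,
    hg _⟩

theorem mapsTo_indicator_iUnion_closure {D : Set (τ → I)} {A : ℕ → Set τ} (hA : Monotone A)
    (happrox : ∀ n, (A n).domRestrict '' D ⊆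
      closure ((A n).domRestrict '' {y ∈ D | support y ⊆ A (n + 1)})) :
    MapsTo (⋃ n, A n).indicator D (closure D) := by
  intro x hx
  rw [mem_closure_iff_nhds]
  intro N hN
  rw [nhds_pi, Filter.mem_pi] at hN
  obtain ⟨F, hF, U, hU, hFU⟩ := hN
  obtain ⟨n, hn⟩ : ∃ n, ((hF.inter_of_left (⋃ n, A n)).toFinset : Set τ) ⊆ A n :=
    hA.directed_le.exists_mem_subset_of_finset_subset_biUnion (by simp)
  simp only [Finite.coe_toFinset] at hn
  have hV : (Subtype.val ⁻¹' F : Set (A n)).pi (fun t => U t) ∈ 𝓝 ((A n).domRestrict x) :=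
    set_pi_mem_nhds (hF.preimage Subtype.val_injective.injOn) fun t _ => by
      simpa [indicator_of_mem (mem_iUnion_of_mem n t.2)] using hU t
  obtain ⟨_, hzV, y, ⟨hyD, hyA⟩, rfl⟩ :=
    mem_closure_iff_nhds.1 (happrox n ⟨x, hx, rfl⟩) _ hV
  refine ⟨y, hFU fun t ht => ?_, hyD⟩
  by_cases htA : t ∈ ⋃ n, A n
  · exact hzV ⟨t, hn ⟨ht, htA⟩⟩ ht
  · have hy0 : y t = 0 := notMem_support.1 fun h => htA (mem_iUnion_of_mem (n + 1) (hyA h))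
    simpa [hy0, indicator_of_notMem htA] using mem_of_mem_nhds (hU t)

theorem exists_countable_superset_mapsTo_indicator {K : Set (τ → I)}
    (hKD : K = closure (K ∩ SigmaProd τ)) {A : Set τ} (hA : A.Countable) :
    ∃ B, A ⊆ B ∧ B.Countable ∧ MapsTo B.indicator K K := by
  choose! step hstep using fun (A : Set τ) (hA : A.Countable) =>
    exists_countable_approx (D := K ∩ SigmaProd τ) inter_subset_right hA
  let seq : ℕ → Set τ := fun n => step^[n] A
  have hseq_succ : ∀ n, seq (n + 1) = step (seq n) := fun n => iterate_succ_apply' step n A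
  have hseq : ∀ n, (seq n).Countable := fun n => by
    induction n with
    | zero => exact hA
    | succ n ih => exact hseq_succ n ▸ (hstep _ ih).2.1
  have hmono : Monotone seq := monotone_nat_of_le_succ fun n => hseq_succ n ▸ (hstep _ (hseq n)).1
  refine ⟨⋃ n, seq n, subset_iUnion seq 0, countable_iUnion hseq, ?_⟩
  have hD := (mapsTo_indicator_iUnion_closure hmono fun n =>
    hseq_succ n ▸ (hstep _ (hseq n)).2.2).closure (continuous_indicator_pi _)
  rwa [closure_closure, ← hKD] at hD

end ClosingOff

theorem mapsTo_indicator_iUnion {τ κ : Type*} [SemilatticeSup κ] [Nonempty κ] {K : Set (τ → I)}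
    (hK : IsClosed K) {A : κ → Set τ} (hA : Monotone A) (h : ∀ i, MapsTo (A i).indicator K K) :
    MapsTo (⋃ i, A i).indicator K K := fun x hx => by
  refine hK.mem_of_tendsto (f := fun i => (A i).indicator x) (b := atTop)
    (tendsto_pi_nhds.2 fun t => tendsto_const_nhds.congr' ?_) (Eventually.of_forall (h · hx))
  by_cases ht : t ∈ ⋃ i, A i
  · obtain ⟨i₀, hi₀⟩ := mem_iUnion.1 ht
    filter_upwards [eventually_ge_atTop i₀] with i hi
    rw [indicator_of_mem ht, indicator_of_mem (hA hi hi₀)]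
  · filter_upwards with i
    rw [indicator_of_notMem ht, indicator_of_notMem fun hi => ht (mem_iUnion_of_mem i hi)]

section CoordChain

variable {τ : Type u} {ι : Type v} [LinearOrder ι] [SuccOrder ι] [WellFoundedLT ι]

noncomputable def coordChain (cl : Set τ → Set τ) (f : τ → ι) (δ : ι) : Set τ :=
  SuccOrder.limitRecOn (motive := fun _ => Set τ) δ (fun _ _ => cl ∅)
    (fun a _ A => cl (A ∪ f ⁻¹' {a})) (fun a _ A => ⋃ b : Iio a, A b b.2)

variable {cl : Set τ → Set τ} {f : τ → ι}

theorem coordChain_succ [NoMaxOrder ι] (a : ι) :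
    coordChain cl f (succ a) = cl (coordChain cl f a ∪ f ⁻¹' {a}) :=
  SuccOrder.limitRecOn_succ ..

theorem coordChain_of_isSuccLimit {δ : ι} (hδ : IsSuccLimit δ) :
    coordChain cl f δ = ⋃ b : Iio δ, coordChain cl f b :=
  SuccOrder.limitRecOn_of_isSuccLimit _ _ _ hδ

theorem coordChain_of_isMin {δ : ι} (hδ : IsMin δ) : coordChain cl f δ = cl ∅ :=
  SuccOrder.limitRecOn_isMin _ _ _ hδ

variable [NoMaxOrder ι]

theorem coordChain_countable (hcl : ∀ A, A.Countable → (cl A).Countable) (hf : Injective f)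
    (hι : ∀ δ : ι, (Iio δ).Countable) (δ : ι) : (coordChain cl f δ).Countable := by
  induction δ using SuccOrder.limitRecOn with
  | isMin a ha => exact coordChain_of_isMin ha ▸ hcl ∅ countable_empty
  | succ a _ ih => exact coordChain_succ a ▸ hcl _ (ih.union ((countable_singleton a).preimage hf))
  | isSuccLimit a ha ih =>
    have := (hι a).to_subtype
    exact coordChain_of_isSuccLimit ha ▸ countable_iUnion fun b => ih b b.2

theorem subset_coordChain_succ (hcl : ∀ A, A.Countable → A ⊆ cl A ∧ (cl A).Countable)
    (hf : Injective f) (hι : ∀ δ : ι, (Iio δ).Countable) (a : ι) :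
    coordChain cl f a ∪ f ⁻¹' {a} ⊆ coordChain cl f (succ a) :=
  coordChain_succ a ▸ (hcl _ ((coordChain_countable (fun A hA => (hcl A hA).2) hf hι a).union
    ((countable_singleton a).preimage hf))).1

theorem coordChain_monotone (hcl : ∀ A, A.Countable → A ⊆ cl A ∧ (cl A).Countable)
    (hf : Injective f) (hι : ∀ δ : ι, (Iio δ).Countable) : Monotone (coordChain cl f) := by
  refine monotone_iff_forall_lt.2 fun γ δ h => ?_
  induction δ using SuccOrder.limitRecOn with
  | isMin a ha => exact absurd h ha.not_lt
  | succ a _ ih =>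
    have hγa : coordChain cl f γ ⊆ coordChain cl f a :=
      (lt_succ_iff.1 h).eq_or_lt.elim (fun h => h ▸ subset_rfl) ih
    exact hγa.trans (subset_union_left.trans (subset_coordChain_succ hcl hf hι a))
  | isSuccLimit a ha _ =>
    exact coordChain_of_isSuccLimit ha ▸ subset_iUnion_of_subset ⟨γ, h⟩ subset_rfl

theorem coordChain_mapsTo {K : Set (τ → I)} (hK : IsClosed K)
    (hcl : ∀ A, A.Countable → A ⊆ cl A ∧ (cl A).Countable)
    (hclK : ∀ A, A.Countable → MapsTo (cl A).indicator K K) (hf : Injective f)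
    (hι : ∀ δ : ι, (Iio δ).Countable) (δ : ι) : MapsTo (coordChain cl f δ).indicator K K := by
  have hcount := coordChain_countable (fun A hA => (hcl A hA).2) hf hι
  induction δ using SuccOrder.limitRecOn with
  | isMin a ha => exact coordChain_of_isMin ha ▸ hclK ∅ countable_empty
  | succ a _ _ =>
    exact coordChain_succ a ▸ hclK _ ((hcount a).union ((countable_singleton a).preimage hf))
  | isSuccLimit a ha ih =>
    obtain ⟨b, hb⟩ := not_isMin_iff.1 ha.not_isMin
    have : Nonempty (Iio a) := ⟨⟨b, hb⟩⟩
    exact coordChain_of_isSuccLimit ha ▸ mapsTo_indicator_iUnion hK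
      (fun _ _ h => coordChain_monotone hcl hf hι h) fun c => ih c c.2

end CoordChain

theorem exists_tower_of_isValdiviaEmbedding {X : Type*} [TopologicalSpace X] [CompactSpace X]
    {τ : Type u} {h : X → τ → I} (hh : IsValdiviaEmbedding h) {ι : Type v} [LinearOrder ι]
    [SuccOrder ι] [WellFoundedLT ι] [NoMaxOrder ι] [Nonempty ι] (hι : ∀ δ : ι, (Iio δ).Countable)
    (f : τ ↪ ι) :
    ∃ T : Tower.{u, v} ι, T.IsContInvSeq ∧ (∀ α, MetrizableSpace (T.S α)) ∧
      (∀ ⦃α β : ι⦄ (h : α ≤ β), IsRetraction (T.r h)) ∧ Nonempty (X ≃ₜ T.Lim) := by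
  have hK : IsCompact (range h) := isCompact_range hh.1.continuous
  choose! cl hcl using fun (A : Set τ) (hA : A.Countable) =>
    exists_countable_superset_mapsTo_indicator hh.2 hA
  have hcl' : ∀ A, A.Countable → A ⊆ cl A ∧ (cl A).Countable :=
    fun A hA => ⟨(hcl A hA).1, (hcl A hA).2.1⟩
  have hmaps := coordChain_mapsTo hK.isClosed hcl' (fun A hA => (hcl A hA).2.2) f.injective hι
  have hT := isContInvSeq_indicatorTower (hA := coordChain_monotone hcl' f.injective hι) hK hmaps
    fun δ hδ => (coordChain_of_isSuccLimit hδ).subset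
  have hcover : ∀ t, ∃ δ, t ∈ coordChain cl f δ := fun t =>
    ⟨succ (f t), subset_coordChain_succ hcl' f.injective hι (f t) (Or.inr rfl)⟩
  obtain ⟨φ⟩ := nonempty_homeomorph_indicatorTower_lim hK hmaps hcover hT
  exact ⟨_, hT, fun δ => metrizableSpace_indicatorTower hK
    (coordChain_countable (fun A hA => (hcl' A hA).2) f.injective hι δ),
    fun _ _ => isRetraction_indicatorTower_r hmaps, ⟨hh.1.toHomeomorph.trans φ⟩⟩

theorem exists_isTopologicalBasis_mk_le_tweight (X : Type u) [TopologicalSpace X] :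
    ∃ B : Set (Set X), IsTopologicalBasis B ∧ #B ≤ tweight X := by
  obtain ⟨B, hB, hc⟩ := csInf_mem (s := {c | ∃ B : Set (Set X), IsTopologicalBasis B ∧ #B = c})
    ⟨_, _, isTopologicalBasis_opens, rfl⟩
  exact ⟨B, hB, hc.le⟩

/-- One coordinate for each pair of basic open sets that some coordinate separates. -/
theorem exists_separating_coords {X T : Type u} [TopologicalSpace X] {h : X → T → I}
    (hc : Continuous h) (hi : Injective h) {B : Set (Set X)} (hB : IsTopologicalBasis B) :
    ∃ S : Set T, #S ≤ #B * #B ∧ Injective fun x (s : S) => h x s := by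
  let P := {p : B × B // ∃ t, ∀ x ∈ p.1.1, ∀ y ∈ p.2.1, h x t ≠ h y t}
  choose c hc' using fun p : P => p.2
  refine ⟨range c, mk_range_le.trans <| (mk_subtype_le _).trans <| by rw [mk_prod, lift_id], ?_⟩
  intro x y hxy
  by_contra hne
  obtain ⟨t, ht⟩ : ∃ t, h x t ≠ h y t := not_forall.1 fun H => hne (hi (funext H))
  obtain ⟨U, V, hU, hV, hxU, hyV, hUV⟩ := t2_separation ht
  have hct : Continuous fun z => h z t := (continuous_apply t).comp hc
  obtain ⟨b₁, hb₁, hxb₁, hb₁U⟩ := hB.exists_subset_of_mem_open hxU (hU.preimage hct)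
  obtain ⟨b₂, hb₂, hyb₂, hb₂V⟩ := hB.exists_subset_of_mem_open hyV (hV.preimage hct)
  let p : P := ⟨(⟨b₁, hb₁⟩, ⟨b₂, hb₂⟩), t, fun x' hx' y' hy' he =>
    disjoint_left.1 hUV (hb₁U hx') (by simpa only [mem_preimage, ← he] using hb₂V hy')⟩
  exact hc' p x hxb₁ y hyb₂ (congrFun hxy ⟨c p, p, rfl⟩)

theorem IsValdiviaEmbedding.restrict {X T : Type*} [TopologicalSpace X] [CompactSpace X]
    {h : X → T → I} (hh : IsValdiviaEmbedding h) (S : Set T)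
    (hS : Injective fun x (s : S) => h x s) : IsValdiviaEmbedding fun x (s : S) => h x s := by
  let π : (T → I) → (S → I) := fun y s => y s
  have hπ : Continuous π := continuous_pi fun s => continuous_apply s.1
  refine isValdiviaEmbedding_of_subset_closure (hπ.comp hh.1.continuous) hS ?_
  calc range (π ∘ h) = π '' range h := range_comp π h
    _ ⊆ π '' closure (range h ∩ SigmaProd T) := image_mono hh.2.subset
    _ ⊆ closure (π '' (range h ∩ SigmaProd T)) := image_closure_subset_closure_image hπ
    _ ⊆ closure (range (π ∘ h) ∩ SigmaProd S) := closure_mono <| by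
      rintro _ ⟨y, ⟨⟨x, rfl⟩, hy⟩, rfl⟩
      exact ⟨⟨x, rfl⟩, (hy.preimage Subtype.val_injective).mono fun _ h => h⟩

theorem IsValdivia.exists_embedding_of_tweight_le {X : Type u} [TopologicalSpace X]
    [CompactSpace X] (hX : IsValdivia X) (hw : tweight X ≤ ℵ₁) :
    ∃ (τ : Type u) (h : X → τ → I), #τ ≤ ℵ₁ ∧ IsValdiviaEmbedding h := by
  obtain ⟨T, h, hh⟩ := hX
  obtain ⟨B, hB, hBw⟩ := exists_isTopologicalBasis_mk_le_tweight X
  obtain ⟨S, hS, hSi⟩ := exists_separating_coords hh.1.continuous hh.1.injective hB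
  refine ⟨S, _, hS.trans ?_, hh.restrict S hSi⟩
  calc #B * #B ≤ ℵ₁ * ℵ₁ := mul_le_mul' (hBw.trans hw) (hBw.trans hw)
    _ = ℵ₁ := mul_eq_self (aleph0_le_aleph 1)

theorem mk_ord_aleph_one_toType : #(ℵ₁ : Cardinal.{u}).ord.ToType = ℵ₁ := by
  simp

theorem countable_Iio_ord_aleph_one_toType (δ : (ℵ₁ : Cardinal.{u}).ord.ToType) :
    (Iio δ).Countable := by
  have := mk_Iio_lt δ (by rw [mk_ord_aleph_one_toType, Ordinal.type_toType])
  rw [mk_ord_aleph_one_toType] at this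
  exact le_aleph0_iff_set_countable.1 (lt_aleph_one_iff.1 this)

theorem statement12_general {X : Type u} [TopologicalSpace X] [CompactSpace X]
    (hw : tweight X ≤ Cardinal.aleph 1) :
    IsValdivia X ↔
      ∃ T : Tower.{u, u} (Cardinal.aleph 1 : Cardinal.{u}).ord.ToType,
        T.IsContInvSeq ∧
        (∀ α, TopologicalSpace.MetrizableSpace (T.S α)) ∧
        (∀ ⦃α β : (Cardinal.aleph 1 : Cardinal.{u}).ord.ToType⦄ (h : α ≤ β),
          IsRetraction (T.r h)) ∧
        Nonempty (X ≃ₜ T.Lim) := by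
  have := Cardinal.noMaxOrder (aleph0_le_aleph 1)
  have : Nonempty (ℵ₁ : Cardinal.{u}).ord.ToType :=
    mk_ne_zero_iff.1 (by rw [mk_ord_aleph_one_toType]; exact (aleph_pos 1).ne')
  constructor
  · intro hX
    obtain ⟨τ, h, hτ, hh⟩ := hX.exists_embedding_of_tweight_le hw
    obtain ⟨f⟩ := (le_def τ _).1 (hτ.trans mk_ord_aleph_one_toType.ge)
    exact exists_tower_of_isValdiviaEmbedding hh countable_Iio_ord_aleph_one_toType f
  · rintro ⟨T, hT, hmet, hret, ⟨φ⟩⟩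
    let := WellFoundedLT.toOrderBot (ℵ₁ : Cardinal.{u}).ord.ToType
    exact (hT.isValdivia_lim countable_Iio_ord_aleph_one_toType hmet hret).of_homeomorph φ

/-- a compact Hausdorff space of weight at most `ℵ₁` is Valdivia compact
iff it is homeomorphic to the limit of a continuous inverse sequence, indexed by `ω₁`,
of compact metrizable spaces whose bonding maps are retractions. -/
theorem statement12 {X : Type u} [TopologicalSpace X] [CompactSpace X] [T2Space X]
    (hw : tweight X ≤ Cardinal.aleph 1) :
    IsValdivia X ↔
      ∃ T : Tower.{u, u} (Cardinal.aleph 1 : Cardinal.{u}).ord.ToType,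
        T.IsContInvSeq ∧
        (∀ α, TopologicalSpace.MetrizableSpace (T.S α)) ∧
        (∀ ⦃α β : (Cardinal.aleph 1 : Cardinal.{u}).ord.ToType⦄ (h : α ≤ β),
          IsRetraction (T.r h)) ∧
        Nonempty (X ≃ₜ T.Lim) :=
  statement12_general hw
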